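/- Block dropping: for any context E consisting only of interleavings of break frames and scoped blocks as above with equal store domains and namespaces, ⟨{E[{S'}_{L₂}^N]}_{L₁}^N | G; L'; N'⟩ →* ⟨𝕄 | G''; L''; N''⟩ if and only if ⟨{E[S']}_{L₁}^N | G; L'; N'⟩ →* ⟨𝕄 | G''; L''; N''⟩, provided dom(L₁) = dom(L₂); i.e., an inner block frame nested under an outer block frame with the same store domain can be dropped. -/

import Mathlib

namespace Yul

abbrev Var := String

/-- Yul operational syntax: source-level statements and expressions merged with
    runtime constructs (modes, scoped blocks, break/continue frames, call frames, tuples). -/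
inductive Term (Val Op Ext : Type) : Type where
  | block (ss : List (Term Val Op Ext))
  | fundef (f : Var) (ps rs : List Var) (body : Term Val Op Ext)
  | letdecl (xs : List Var) (e : Term Val Op Ext)
  | assign (xs : List Var) (e : Term Val Op Ext)
  | ite (cond : Term Val Op Ext) (body : Term Val Op Ext)
  | switch (scrut : Term Val Op Ext) (cases : List (Val × Term Val Op Ext))
      (dflt : Term Val Op Ext)
  | forloop (init cond post body : Term Val Op Ext)
  | brk
  | cont
  | leave
  | call (f : Var) (args : List (Term Val Op Ext))
  | opcall (op : Op) (args : List (Term Val Op Ext))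
  | var (x : Var)
  | val (v : Val)
  | regular
  | ext (m : Ext)
  | tuple (vs : List Val)
  | scopedBlock (ss : List (Term Val Op Ext)) (Lsave : Var → Option Val)
      (Nsave : Var → Option (List Var × List Var × Term Val Op Ext))
  | brkFrame (s : Term Val Op Ext)
  | cntFrame (s : Term Val Op Ext)
  | callFrame (s : Term Val Op Ext) (Lsave : Var → Option Val) (rets : List Var)

/-- Local variable stores. -/
abbrev Store (Val : Type) := Var → Option Val

/-- Function namespaces. -/
abbrev NS (Val Op Ext : Type) := Var → Option (List Var × List Var × Term Val Op Ext)

variable {Val Op Ext Gl : Type}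

def Dom (L : Store Val) : Set Var := {x | (L x).isSome}

/-- `restrict L1 L` is `L1 ↾ L` : restriction of `L1` to the domain of `L`. -/
def restrict (L1 L : Store Val) : Store Val :=
  fun x => if (L x).isSome then L1 x else none

def updStore (L : Store Val) (x : Var) (v : Val) : Store Val :=
  fun y => if y = x then some v else L y

def updMany (L : Store Val) (xs : List Var) (vs : List Val) : Store Val :=
  (List.zip xs vs).foldl (fun L p => updStore L p.1 p.2) L

def emptyStore : Store Val := fun _ => none

def updNS (N : NS Val Op Ext) (f : Var)
    (d : List Var × List Var × Term Val Op Ext) : NS Val Op Ext :=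
  fun y => if y = f then some d else N y

/-- `funsof`: extend the namespace with the functions defined at the top level of a block. -/
def extendFuns (ss : List (Term Val Op Ext)) (N : NS Val Op Ext) : NS Val Op Ext :=
  ss.foldl (fun N s =>
    match s with
    | .fundef f ps rs body => updNS N f (ps, rs, body)
    | _ => N) N

/-- Return-value packaging: `⟨⟩ = regular`, `⟨v⟩ = v`, `⟨v⃗⟩` a tuple for more values. -/
def mkRet (vs : List Val) : Term Val Op Ext :=
  match vs with
  | [] => .regular
  | [v] => .val v
  | vs => .tuple vs

/-- A Yul dialect: truth/falsehood of values, the default value, and the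
    (possibly failing) opcode evaluation relation `⇓_opc`. -/
structure Dialect (Val Op Ext Gl : Type) where
  isTrue : Val → Prop
  isFalse : Val → Prop
  zero : Val
  opc : Op → List Val → Gl → (List Val ⊕ Ext) → Gl → Prop

def IsIrregularCore (t : Term Val Op Ext) : Prop :=
  t = .brk ∨ t = .cont ∨ t = .leave

/-- The modes `regular`, `break`, `continue`, `leave`. -/
def IsModeCore (t : Term Val Op Ext) : Prop :=
  t = .regular ∨ t = .brk ∨ t = .cont ∨ t = .leave

/-- All modes, including external irregular modes ℳ. -/
def IsMode (t : Term Val Op Ext) : Prop :=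
  IsModeCore t ∨ ∃ m, t = .ext m

/-- Results of completed expressions/calls: a value, a tuple, or `regular`. -/
def IsRet (t : Term Val Op Ext) : Prop :=
  (∃ v, t = .val v) ∨ (∃ vs, t = .tuple vs) ∨ t = .regular

/-- `S_ret ::= v | ⟨v⃗⟩ | 𝕄`. -/
def IsRetAny (t : Term Val Op Ext) : Prop := IsRet t ∨ IsModeCore t

/-- Evaluation contexts. -/
inductive Ctx (Val Op Ext : Type) : Type where
  | hole
  | scopedC (E : Ctx Val Op Ext) (rest : List (Term Val Op Ext)) (L : Store Val)
      (N : NS Val Op Ext)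
  | letC (xs : List Var) (E : Ctx Val Op Ext)
  | assignC (xs : List Var) (E : Ctx Val Op Ext)
  | cntC (E : Ctx Val Op Ext)
  | brkC (E : Ctx Val Op Ext)
  | iteC (E : Ctx Val Op Ext) (body : Term Val Op Ext)
  | switchC (E : Ctx Val Op Ext) (cases : List (Val × Term Val Op Ext))
      (dflt : Term Val Op Ext)
  | callC (f : Var) (before : List (Term Val Op Ext)) (E : Ctx Val Op Ext)
      (after : List Val)
  | opcallC (op : Op) (before : List (Term Val Op Ext)) (E : Ctx Val Op Ext)
      (after : List Val)
  | frameC (E : Ctx Val Op Ext) (L : Store Val) (rets : List Var)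

def plug (E : Ctx Val Op Ext) (t : Term Val Op Ext) : Term Val Op Ext :=
  match E with
  | .hole => t
  | .scopedC E rest L N => .scopedBlock (plug E t :: rest) L N
  | .letC xs E => .letdecl xs (plug E t)
  | .assignC xs E => .assign xs (plug E t)
  | .cntC E => .cntFrame (plug E t)
  | .brkC E => .brkFrame (plug E t)
  | .iteC E body => .ite (plug E t) body
  | .switchC E cs d => .switch (plug E t) cs d
  | .callC f before E after => .call f (before ++ plug E t :: after.map Term.val)
  | .opcallC op before E after => .opcall op (before ++ plug E t :: after.map Term.val)
  | .frameC E L rets => .callFrame (plug E t) L rets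

/-- Base small-step reduction rules of Yul. -/
inductive Base (D : Dialect Val Op Ext Gl) :
    Term Val Op Ext → Gl → Store Val → NS Val Op Ext →
    Term Val Op Ext → Gl → Store Val → NS Val Op Ext → Prop where
  | blockEnter (ss G L N) (h : ss ≠ []) :
      Base D (.block ss) G L N (.scopedBlock ss L N) G L (extendFuns ss N)
  | blockEmpty (G L N) :
      Base D (.block []) G L N .regular G L N
  | scopedNext (ss L0 N0 G L N) (h : ss ≠ []) :
      Base D (.scopedBlock (.regular :: ss) L0 N0) G L N (.scopedBlock ss L0 N0) G L N
  | scopedExitReg (L0 N0 G L N) :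
      Base D (.scopedBlock [.regular] L0 N0) G L N .regular G (restrict L L0) N0
  | scopedExitIrr (m ss L0 N0 G L N) (h : IsIrregularCore m) :
      Base D (.scopedBlock (m :: ss) L0 N0) G L N m G (restrict L L0) N0
  | fundefSkip (f ps rs body G L N) :
      Base D (.fundef f ps rs body) G L N .regular G L N
  | letSingle (x v G L N) (h : L x = none) :
      Base D (.letdecl [x] (.val v)) G L N .regular G (updStore L x v) N
  | letTuple (xs vs G L N) (hlen : xs.length = vs.length)
      (hfresh : ∀ x ∈ xs, L x = none) :
      Base D (.letdecl xs (.tuple vs)) G L N .regular G (updMany L xs vs) N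
  | assignSingle (x v G L N) (h : (L x).isSome) :
      Base D (.assign [x] (.val v)) G L N .regular G (updStore L x v) N
  | assignTuple (xs vs G L N) (hlen : xs.length = vs.length)
      (hdom : ∀ x ∈ xs, (L x).isSome) :
      Base D (.assign xs (.tuple vs)) G L N .regular G (updMany L xs vs) N
  | iteFalse (v body G L N) (h : D.isFalse v) :
      Base D (.ite (.val v) body) G L N .regular G L N
  | iteTrue (v body G L N) (h : D.isTrue v) :
      Base D (.ite (.val v) body) G L N body G L N
  | switchDefault (v cs d G L N) (h : ∀ c ∈ cs, c.1 ≠ v) :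
      Base D (.switch (.val v) cs d) G L N d G L N
  | switchCase (c body pre post d G L N) (h : ∀ p ∈ pre, p.1 ≠ c) :
      Base D (.switch (.val c) (pre ++ (c, body) :: post) d) G L N body G L N
  | forInit (ss M Sp Sb G L N) (h : ss ≠ []) :
      Base D (.forloop (.block ss) M Sp Sb) G L N
        (.block (ss ++ [.forloop (.block []) M Sp Sb])) G L N
  | forUnfold (M Sp Sb G L N) :
      Base D (.forloop (.block []) M Sp Sb) G L N
        (.brkFrame (.ite M
          (.block [.cntFrame Sb, Sp, .forloop (.block []) M Sp Sb]))) G L N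
  | cntPass (m G L N) (h : m = .regular ∨ m = .brk ∨ m = .leave) :
      Base D (.cntFrame m) G L N m G L N
  | cntCatch (G L N) :
      Base D (.cntFrame .cont) G L N .regular G L N
  | brkPass (m G L N) (h : m = .regular ∨ m = .leave) :
      Base D (.brkFrame m) G L N m G L N
  | brkCatch (G L N) :
      Base D (.brkFrame .brk) G L N .regular G L N
  | varLookup (x v G L N) (h : L x = some v) :
      Base D (.var x) G L N (.val v) G L N
  | callEnter (f vs ps rs body G L N) (hN : N f = some (ps, rs, body))
      (hlen : ps.length = vs.length) :
      Base D (.call f (vs.map Term.val)) G L N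
        (.callFrame body L rs) G
        (updMany (updMany emptyStore rs (rs.map fun _ => D.zero)) ps vs) N
  | frameExit (m Lsave rs ws G L N) (hm : m = .leave ∨ m = .regular)
      (hws : List.Forall₂ (fun z w => L z = some w) rs ws) :
      Base D (.callFrame m Lsave rs) G L N (mkRet ws) G Lsave N
  | opcallOk (op vs ws G G' L N) (h : D.opc op vs G (Sum.inl ws) G') :
      Base D (.opcall op (vs.map Term.val)) G L N (mkRet ws) G' L N
  | opcallErr (op vs m G G' L N) (h : D.opc op vs G (Sum.inr m) G') :
      Base D (.opcall op (vs.map Term.val)) G L N (.ext m) G' L N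

/-- Configurations `⟨S | G; L; N⟩`. -/
abbrev Config (Val Op Ext Gl : Type) :=
  Term Val Op Ext × Gl × Store Val × NS Val Op Ext

/-- The small-step relation: base rules closed under evaluation contexts,
    plus the top-level propagation of external irregular modes. -/
inductive Step (D : Dialect Val Op Ext Gl) :
    Config Val Op Ext Gl → Config Val Op Ext Gl → Prop where
  | ctx (E S G L N S' G' L' N') (h : Base D S G L N S' G' L' N') :
      Step D (plug E S, G, L, N) (plug E S', G', L', N')
  | extProp (E m G L N) (h : E ≠ Ctx.hole) :
      Step D (plug E (.ext m), G, L, N) (.ext m, G, L, N)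

/-- Zero or more small steps. -/
abbrev Steps (D : Dialect Val Op Ext Gl) :
    Config Val Op Ext Gl → Config Val Op Ext Gl → Prop :=
  Relation.ReflTransGen (Step D)

mutual
/-- Big-step evaluation of statements `⟨S | G; L; N⟩ ⇓ ⟨𝕄 | G'; L'; N'⟩`. -/
inductive Big (D : Dialect Val Op Ext Gl) :
    Term Val Op Ext → Gl → Store Val → NS Val Op Ext →
    Term Val Op Ext → Gl → Store Val → NS Val Op Ext → Prop where
  | blockB {ss M G L N G1 L1}
      (h : BigSeq D ss G L (extendFuns ss N) M G1 L1 (extendFuns ss N)) :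
      Big D (.block ss) G L N M G1 (restrict L1 L) N
  | fundefB {f ps rs body G L N} :
      Big D (.fundef f ps rs body) G L N .regular G L N
  | brkB {G L N} : Big D .brk G L N .brk G L N
  | contB {G L N} : Big D .cont G L N .cont G L N
  | leaveB {G L N} : Big D .leave G L N .leave G L N
  | letSingleB {x e v G L N G1 L1}
      (h1 : BigExp D e G L N (.val v) G1 L1 N) (h2 : L x = none) :
      Big D (.letdecl [x] e) G L N .regular G1 (updStore L1 x v) N
  | letTupleB {xs e vs G L N G1 L1}
      (h1 : BigExp D e G L N (.tuple vs) G1 L1 N)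
      (hlen : xs.length = vs.length) (hfresh : ∀ x ∈ xs, L x = none) :
      Big D (.letdecl xs e) G L N .regular G1 (updMany L1 xs vs) N
  | assignSingleB {x e v G L N G1 L1}
      (h1 : BigExp D e G L N (.val v) G1 L1 N) (h2 : (L x).isSome) :
      Big D (.assign [x] e) G L N .regular G1 (updStore L1 x v) N
  | assignTupleB {xs e vs G L N G1 L1}
      (h1 : BigExp D e G L N (.tuple vs) G1 L1 N)
      (hlen : xs.length = vs.length) (hdom : ∀ x ∈ xs, (L x).isSome) :
      Big D (.assign xs e) G L N .regular G1 (updMany L1 xs vs) N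
  | exprB {M G L N G' L'}
      (h : BigExp D M G L N .regular G' L' N) :
      Big D M G L N .regular G' L' N
  | ifF {M body v G L N G0 L0}
      (h1 : BigExp D M G L N (.val v) G0 L0 N) (h2 : D.isFalse v) :
      Big D (.ite M body) G L N .regular G0 L0 N
  | ifT {M body v MM G L N G0 L0 G1 L1}
      (h1 : BigExp D M G L N (.val v) G0 L0 N) (h2 : D.isTrue v)
      (h3 : Big D body G0 L0 N MM G1 L1 N) :
      Big D (.ite M body) G L N MM G1 L1 N
  | swD {M cs d v MM G L N G0 L0 G1 L1}
      (h1 : BigExp D M G L N (.val v) G0 L0 N)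
      (h2 : ∀ c ∈ cs, c.1 ≠ v)
      (h3 : Big D d G0 L0 N MM G1 L1 N) :
      Big D (.switch M cs d) G L N MM G1 L1 N
  | swC {M pre c body post d MM G L N G0 L0 G1 L1}
      (h1 : BigExp D M G L N (.val c) G0 L0 N)
      (hpre : ∀ p ∈ pre, p.1 ≠ c)
      (h3 : Big D body G0 L0 N MM G1 L1 N) :
      Big D (.switch M (pre ++ (c, body) :: post) d) G L N MM G1 L1 N
  | forInitB {ss M Sp Sb MM G L N G2 L2} (hne : ss ≠ [])
      (h : Big D (.block (ss ++ [.forloop (.block []) M Sp Sb])) G L N MM G2 L2 N) :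
      Big D (.forloop (.block ss) M Sp Sb) G L N MM G2 L2 N
  | forFalseB {M Sp Sb v G L N G1 L1}
      (h1 : BigExp D M G L N (.val v) G1 L1 N) (h2 : D.isFalse v) :
      Big D (.forloop (.block []) M Sp Sb) G L N .regular G1 L1 N
  | forHalt1B {M Sp Sb v Mlb Mout G L N G1 L1 G2 L2}
      (h1 : BigExp D M G L N (.val v) G1 L1 N) (h2 : D.isTrue v)
      (h3 : Big D Sb G1 L1 N Mlb G2 L2 N)
      (h4 : (Mlb = .leave ∧ Mout = .leave) ∨ (Mlb = .brk ∧ Mout = .regular)) :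
      Big D (.forloop (.block []) M Sp Sb) G L N Mout G2 L2 N
  | forHalt2B {M Sp Sb v MM G L N G1 L1 G2 L2 G3 L3}
      (h1 : BigExp D M G L N (.val v) G1 L1 N) (h2 : D.isTrue v)
      (h3 : Big D Sb G1 L1 N MM G2 L2 N)
      (h4 : MM = .regular ∨ MM = .cont)
      (h5 : Big D Sp G2 L2 N .leave G3 L3 N) :
      Big D (.forloop (.block []) M Sp Sb) G L N .leave G3 L3 N
  | forLoopB {M Sp Sb v MM MM' G L N G1 L1 G2 L2 G3 L3 G4 L4}
      (h1 : BigExp D M G L N (.val v) G1 L1 N) (h2 : D.isTrue v)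
      (h3 : Big D Sb G1 L1 N MM G2 L2 N)
      (h4 : MM = .regular ∨ MM = .cont)
      (h5 : Big D Sp G2 L2 N .regular G3 L3 N)
      (h6 : Big D (.forloop (.block []) M Sp Sb) G3 L3 N MM' G4 L4 N) :
      Big D (.forloop (.block []) M Sp Sb) G L N MM' G4 L4 N

/-- Big-step evaluation of statement sequences `⇓_seq`. -/
inductive BigSeq (D : Dialect Val Op Ext Gl) :
    List (Term Val Op Ext) → Gl → Store Val → NS Val Op Ext →
    Term Val Op Ext → Gl → Store Val → NS Val Op Ext → Prop where
  | nilB {G L N} : BigSeq D [] G L N .regular G L N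
  | consReg {s ss MM G L N G1 L1 G2 L2}
      (h1 : Big D s G L N .regular G1 L1 N)
      (h2 : BigSeq D ss G1 L1 N MM G2 L2 N) :
      BigSeq D (s :: ss) G L N MM G2 L2 N
  | consIrr {s ss MM G L N G1 L1}
      (h1 : Big D s G L N MM G1 L1 N) (h2 : IsIrregularCore MM) :
      BigSeq D (s :: ss) G L N MM G1 L1 N

/-- Big-step evaluation of expressions `⇓_exp`. -/
inductive BigExp (D : Dialect Val Op Ext Gl) :
    Term Val Op Ext → Gl → Store Val → NS Val Op Ext →
    Term Val Op Ext → Gl → Store Val → NS Val Op Ext → Prop where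
  | identB {x v G L N} (h : L x = some v) :
      BigExp D (.var x) G L N (.val v) G L N
  | valB {v G L N} : BigExp D (.val v) G L N (.val v) G L N
  | funCallB {f args vs ps rs body MM ws G L N Gn Ln G'' L''}
      (hargs : BigArgs D args G L N vs Gn Ln)
      (hN : N f = some (ps, rs, body))
      (hlen : ps.length = vs.length)
      (hbody : Big D body Gn
        (updMany (updMany emptyStore rs (rs.map fun _ => D.zero)) ps vs) N MM G'' L'' N)
      (hret : List.Forall₂ (fun z w => L'' z = some w) rs ws) :
      BigExp D (.call f args) G L N (mkRet ws) G'' Ln N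
  | opCallB {op args vs ws G L N Gn Ln G''}
      (hargs : BigArgs D args G L N vs Gn Ln)
      (h : D.opc op vs Gn (Sum.inl ws) G'') :
      BigExp D (.opcall op args) G L N (mkRet ws) G'' Ln N

/-- Right-to-left evaluation of argument lists. -/
inductive BigArgs (D : Dialect Val Op Ext Gl) :
    List (Term Val Op Ext) → Gl → Store Val → NS Val Op Ext →
    List Val → Gl → Store Val → Prop where
  | nilA {G L N} : BigArgs D [] G L N [] G L
  | consA {M Ms v vs G L N G1 L1 G2 L2}
      (htail : BigArgs D Ms G L N vs G1 L1)
      (hhead : BigExp D M G1 L1 N (.val v) G2 L2 N) :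
      BigArgs D (M :: Ms) G L N (v :: vs) G2 L2
end

/-- Source-level syntax: no runtime constructs. -/
inductive IsSource : Term Val Op Ext → Prop where
  | block {ss} (h : ∀ s ∈ ss, IsSource s) : IsSource (.block ss)
  | fundef {f ps rs body} (h : IsSource body) : IsSource (.fundef f ps rs body)
  | letdecl {xs e} (h : IsSource e) : IsSource (.letdecl xs e)
  | assign {xs e} (h : IsSource e) : IsSource (.assign xs e)
  | ite {c b} (h1 : IsSource c) (h2 : IsSource b) : IsSource (.ite c b)
  | switch {M cs d} (h1 : IsSource M) (h2 : ∀ c ∈ cs, IsSource c.2)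
      (h3 : IsSource d) : IsSource (.switch M cs d)
  | forloop {i c p b} (h1 : IsSource i) (h2 : IsSource c) (h3 : IsSource p)
      (h4 : IsSource b) : IsSource (.forloop i c p b)
  | brk : IsSource .brk
  | cont : IsSource .cont
  | leave : IsSource .leave
  | call {f args} (h : ∀ a ∈ args, IsSource a) : IsSource (.call f args)
  | opcall {op args} (h : ∀ a ∈ args, IsSource a) : IsSource (.opcall op args)
  | var {x} : IsSource (.var x)
  | val {v} : IsSource (.val v)

/-- Syntactic restriction on halting statements: `HaltOK inLoop inFun S` says that
    every `break`/`continue` in `S` occurs inside the body of some enclosing for-loop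
    (not separated from it by a function definition) and every `leave` occurs inside
    some enclosing function body; `inLoop`/`inFun` record the ambient context. -/
inductive HaltOK : Bool → Bool → Term Val Op Ext → Prop where
  | block {il fn ss} (h : ∀ s ∈ ss, HaltOK il fn s) : HaltOK il fn (.block ss)
  | fundef {il fn f ps rs body} (h : HaltOK false true body) :
      HaltOK il fn (.fundef f ps rs body)
  | letdecl {il fn xs e} (h : HaltOK il fn e) : HaltOK il fn (.letdecl xs e)
  | assign {il fn xs e} (h : HaltOK il fn e) : HaltOK il fn (.assign xs e)
  | ite {il fn c b} (h1 : HaltOK il fn c) (h2 : HaltOK il fn b) :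
      HaltOK il fn (.ite c b)
  | switch {il fn M cs d} (h1 : HaltOK il fn M) (h2 : ∀ c ∈ cs, HaltOK il fn c.2)
      (h3 : HaltOK il fn d) : HaltOK il fn (.switch M cs d)
  | forloop {il fn i c p b} (h1 : HaltOK il fn i) (h2 : HaltOK il fn c)
      (h3 : HaltOK il fn p) (h4 : HaltOK true fn b) :
      HaltOK il fn (.forloop i c p b)
  | brk {fn} : HaltOK true fn .brk
  | cont {fn} : HaltOK true fn .cont
  | leave {il} : HaltOK il true .leave
  | call {il fn f args} (h : ∀ a ∈ args, HaltOK il fn a) : HaltOK il fn (.call f args)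
  | opcall {il fn op args} (h : ∀ a ∈ args, HaltOK il fn a) :
      HaltOK il fn (.opcall op args)
  | var {il fn x} : HaltOK il fn (.var x)
  | val {il fn v} : HaltOK il fn (.val v)

/-- Frames: break-catching frames `⟦·⟧_brk` or scoped-block frames `{·}_L^N`. -/
inductive Frame (Val : Type) where
  | brkF
  | blockF (L : Store Val)

/-- Apply a list of frames (innermost first), all blocks annotated with namespace `N`. -/
def applyFrames (N : NS Val Op Ext) :
    List (Frame Val) → Term Val Op Ext → Term Val Op Ext
  | [], t => t
  | .brkF :: fs, t => applyFrames N fs (.brkFrame t)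
  | .blockF L :: fs, t => applyFrames N fs (.scopedBlock [t] L N)

/-- Ascending chain of block-frame domains, starting from `d` (innermost first). -/
def Asc (d : Set Var) : List (Frame Val) → Prop
  | [] => True
  | .brkF :: fs => Asc d fs
  | .blockF L :: fs => d ⊆ Dom L ∧ Asc (Dom L) fs

/-! ### Auxiliary machinery for the block-dropping theorem -/

section BlockDropping

variable {Val Op Ext Gl : Type} {D : Dialect Val Op Ext Gl}

/-- Composition of evaluation contexts: replace the hole of `E` by `F`. -/
def comp : Ctx Val Op Ext → Ctx Val Op Ext → Ctx Val Op Ext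
  | .hole, F => F
  | .scopedC E r L N, F => .scopedC (comp E F) r L N
  | .letC xs E, F => .letC xs (comp E F)
  | .assignC xs E, F => .assignC xs (comp E F)
  | .cntC E, F => .cntC (comp E F)
  | .brkC E, F => .brkC (comp E F)
  | .iteC E b, F => .iteC (comp E F) b
  | .switchC E cs d, F => .switchC (comp E F) cs d
  | .callC f b E a, F => .callC f b (comp E F) a
  | .opcallC op b E a, F => .opcallC op b (comp E F) a
  | .frameC E L r, F => .frameC (comp E F) L r

lemma plug_comp (E F : Ctx Val Op Ext) (t : Term Val Op Ext) :
    plug (comp E F) t = plug E (plug F t) := by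
  induction E <;> simp [comp, plug, *]

lemma comp_ne_hole {E F : Ctx Val Op Ext} (h : E ≠ .hole ∨ F ≠ .hole) :
    comp E F ≠ .hole := by
  cases E <;> simp [comp]
  exact h.resolve_left (by simp)

/-- The evaluation context corresponding to a stack of frames. -/
def fCtx (N : NS Val Op Ext) : List (Frame Val) → Ctx Val Op Ext
  | [] => .hole
  | .brkF :: gs => comp (fCtx N gs) (.brkC .hole)
  | .blockF L :: gs => comp (fCtx N gs) (.scopedC .hole [] L N)

lemma plug_fCtx (N : NS Val Op Ext) (gs : List (Frame Val)) (t : Term Val Op Ext) :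
    plug (fCtx N gs) t = applyFrames N gs t := by
  induction gs generalizing t with
  | nil => rfl
  | cons g gs ih => cases g <;> simp [fCtx, applyFrames, plug_comp, plug, ih]

lemma fCtx_ne_hole (N : NS Val Op Ext) {gs : List (Frame Val)} (h : gs ≠ []) :
    fCtx N gs ≠ .hole := by
  cases gs with
  | nil => exact absurd rfl h
  | cons g gs => cases g <;> exact comp_ne_hole (Or.inr (by simp))

lemma applyFrames_append (N : NS Val Op Ext) (as bs : List (Frame Val))
    (t : Term Val Op Ext) :
    applyFrames N (as ++ bs) t = applyFrames N bs (applyFrames N as t) := by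
  induction as generalizing t with
  | nil => rfl
  | cons a as ih => cases a <;> simp [applyFrames, ih]

lemma applyFrames_shape (N : NS Val Op Ext) (gs : List (Frame Val))
    (t : Term Val Op Ext) (h : gs ≠ []) :
    (∃ u, applyFrames N gs t = Term.brkFrame u) ∨
    (∃ l a b, applyFrames N gs t = Term.scopedBlock l a b) := by
  induction gs generalizing t with
  | nil => exact absurd rfl h
  | cons g gs ih =>
    cases gs with
    | nil =>
        cases g with
        | brkF => exact Or.inl ⟨t, rfl⟩
        | blockF L => exact Or.inr ⟨[t], L, N, rfl⟩
    | cons g' gs' => cases g <;> exact ih _ (by simp)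

/-! #### Lifting steps through frame stacks -/

lemma lift_ctx (N : NS Val Op Ext) (gs : List (Frame Val)) (E : Ctx Val Op Ext)
    {S : Term Val Op Ext} {G : Gl} {L : Store Val} {Nn : NS Val Op Ext}
    {S' : Term Val Op Ext} {G' : Gl} {L' : Store Val} {Nn' : NS Val Op Ext}
    (hb : Base D S G L Nn S' G' L' Nn') :
    Step D (applyFrames N gs (plug E S), G, L, Nn)
      (applyFrames N gs (plug E S'), G', L', Nn') := by
  have h := Step.ctx (D := D) (comp (fCtx N gs) E) S G L Nn S' G' L' Nn' hb
  simpa [plug_comp, plug_fCtx] using h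

lemma lift_ext (N : NS Val Op Ext) (gs : List (Frame Val)) (E : Ctx Val Op Ext)
    (e : Ext) (G : Gl) (L : Store Val) (Nn : NS Val Op Ext)
    (h : gs ≠ [] ∨ E ≠ .hole) :
    Step D (applyFrames N gs (plug E (.ext e)), G, L, Nn)
      ((.ext e : Term Val Op Ext), G, L, Nn) := by
  have hne : comp (fCtx N gs) E ≠ .hole := by
    rcases h with h | h
    · exact comp_ne_hole (Or.inl (fCtx_ne_hole N h))
    · exact comp_ne_hole (Or.inr h)
  have h2 := Step.extProp (D := D) (comp (fCtx N gs) E) e G L Nn hne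
  simpa [plug_comp, plug_fCtx] using h2

lemma pop_brk_pass (N : NS Val Op Ext) (gs : List (Frame Val))
    (m : Term Val Op Ext) (G : Gl) (L : Store Val) (Nn : NS Val Op Ext)
    (h : m = .regular ∨ m = .leave) :
    Step D (applyFrames N (.brkF :: gs) m, G, L, Nn)
      (applyFrames N gs m, G, L, Nn) := by
  have h2 := Step.ctx (D := D) (fCtx N gs) (.brkFrame m) G L Nn m G L Nn
    (Base.brkPass m G L Nn h)
  simpa [plug_fCtx, applyFrames] using h2

lemma pop_brk_catch (N : NS Val Op Ext) (gs : List (Frame Val))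
    (G : Gl) (L : Store Val) (Nn : NS Val Op Ext) :
    Step D (applyFrames N (.brkF :: gs) (.brk : Term Val Op Ext), G, L, Nn)
      (applyFrames N gs (.regular : Term Val Op Ext), G, L, Nn) := by
  have h2 := Step.ctx (D := D) (fCtx N gs) (.brkFrame .brk) G L Nn .regular G L Nn
    (Base.brkCatch G L Nn)
  simpa [plug_fCtx, applyFrames] using h2

lemma pop_block_reg (N : NS Val Op Ext) (gs : List (Frame Val)) (L0 : Store Val)
    (G : Gl) (L : Store Val) (Nn : NS Val Op Ext) :
    Step D (applyFrames N (.blockF L0 :: gs) (.regular : Term Val Op Ext), G, L, Nn)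
      (applyFrames N gs (.regular : Term Val Op Ext), G, restrict L L0, N) := by
  have h2 := Step.ctx (D := D) (fCtx N gs) (.scopedBlock [.regular] L0 N) G L Nn
    .regular G (restrict L L0) N (Base.scopedExitReg L0 N G L Nn)
  simpa [plug_fCtx, applyFrames] using h2

lemma pop_block_irr (N : NS Val Op Ext) (gs : List (Frame Val)) (L0 : Store Val)
    {m : Term Val Op Ext} (G : Gl) (L : Store Val) (Nn : NS Val Op Ext)
    (h : IsIrregularCore m) :
    Step D (applyFrames N (.blockF L0 :: gs) m, G, L, Nn)
      (applyFrames N gs m, G, restrict L L0, N) := by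
  have h2 := Step.ctx (D := D) (fCtx N gs) (.scopedBlock [m] L0 N) G L Nn
    m G (restrict L L0) N (Base.scopedExitIrr m [] L0 N G L Nn h)
  simpa [plug_fCtx, applyFrames] using h2

/-! #### Inversion lemmas -/

lemma step_inv {c c' : Config Val Op Ext Gl} (h : Step D c c') :
    (∃ E S G L Nn S' G' L' Nn', Base D S G L Nn S' G' L' Nn' ∧
        c = (plug E S, G, L, Nn) ∧ c' = (plug E S', G', L', Nn'))
    ∨ (∃ E e G L Nn, c = (plug E (Term.ext e), G, L, Nn) ∧
        c' = ((.ext e : Term Val Op Ext), G, L, Nn)) := by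
  cases h with
  | ctx E S G L Nn S' G' L' Nn' hb =>
      exact Or.inl ⟨E, S, G, L, Nn, S', G', L', Nn', hb, rfl, rfl⟩
  | extProp E m G L Nn hne => exact Or.inr ⟨E, m, G, L, Nn, rfl, rfl⟩

lemma plug_eq_brkFrame {E : Ctx Val Op Ext} {S t : Term Val Op Ext}
    (h : plug E S = .brkFrame t) :
    (E = .hole ∧ S = .brkFrame t) ∨ (∃ E₁, E = .brkC E₁ ∧ plug E₁ S = t) := by
  cases E with
  | hole => exact Or.inl ⟨rfl, h⟩
  | brkC E₁ => exact Or.inr ⟨E₁, rfl, by simpa [plug] using h⟩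
  | scopedC E r L N => simp [plug] at h
  | letC xs E => simp [plug] at h
  | assignC xs E => simp [plug] at h
  | cntC E => simp [plug] at h
  | iteC E b => simp [plug] at h
  | switchC E cs d => simp [plug] at h
  | callC f b E a => simp [plug] at h
  | opcallC op b E a => simp [plug] at h
  | frameC E L r => simp [plug] at h

lemma plug_eq_scoped {E : Ctx Val Op Ext} {S t : Term Val Op Ext}
    {L0 : Store Val} {N0 : NS Val Op Ext}
    (h : plug E S = .scopedBlock [t] L0 N0) :
    (E = .hole ∧ S = .scopedBlock [t] L0 N0) ∨
    (∃ E₁, E = .scopedC E₁ [] L0 N0 ∧ plug E₁ S = t) := by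
  cases E with
  | hole => exact Or.inl ⟨rfl, h⟩
  | scopedC E₁ r L N =>
      simp only [plug, Term.scopedBlock.injEq, List.cons.injEq] at h
      obtain ⟨⟨h1, h2⟩, h3, h4⟩ := h
      subst h2; subst h3; subst h4
      exact Or.inr ⟨E₁, rfl, h1⟩
  | brkC E₁ => simp [plug] at h
  | letC xs E => simp [plug] at h
  | assignC xs E => simp [plug] at h
  | cntC E => simp [plug] at h
  | iteC E b => simp [plug] at h
  | switchC E cs d => simp [plug] at h
  | callC f b E a => simp [plug] at h
  | opcallC op b E a => simp [plug] at h
  | frameC E L r => simp [plug] at h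

lemma plug_mode {E : Ctx Val Op Ext} {S m : Term Val Op Ext}
    (hm : m = .regular ∨ IsIrregularCore m ∨ ∃ e, m = .ext e)
    (h : plug E S = m) : E = .hole ∧ S = m := by
  obtain rfl | (rfl | rfl | rfl) | ⟨e, rfl⟩ := hm <;>
    cases E <;> simp [plug] at h <;> exact ⟨rfl, h⟩

lemma base_no_mode {S : Term Val Op Ext} {G : Gl} {L : Store Val}
    {Nn : NS Val Op Ext} {S' : Term Val Op Ext} {G' : Gl} {L' : Store Val}
    {Nn' : NS Val Op Ext} (hb : Base D S G L Nn S' G' L' Nn')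
    (hm : S = .regular ∨ IsIrregularCore S) : False := by
  cases hb <;> simp [IsIrregularCore] at hm

/-- The main inversion lemma: a step from a term wrapped in a stack of frames is
    either a step inside the inner term, an external-mode propagation, or a pop of
    the innermost frame. -/
lemma step_frames_inv {N : NS Val Op Ext} {gs : List (Frame Val)}
    {t : Term Val Op Ext} {G : Gl} {L : Store Val} {Nn : NS Val Op Ext}
    {c' : Config Val Op Ext Gl}
    (h : Step D (applyFrames N gs t, G, L, Nn) c') :
    (∃ E S S' G' L' Nn', t = plug E S ∧ Base D S G L Nn S' G' L' Nn' ∧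
        c' = (applyFrames N gs (plug E S'), G', L', Nn'))
    ∨ (∃ E e, t = plug E (Term.ext e) ∧ c' = ((.ext e : Term Val Op Ext), G, L, Nn))
    ∨ (∃ gs', (gs = .brkF :: gs' ∧
          (((t = .regular ∨ t = .leave) ∧ c' = (applyFrames N gs' t, G, L, Nn)) ∨
           (t = .brk ∧ c' = (applyFrames N gs' (.regular : Term Val Op Ext), G, L, Nn))))
        ∨ (∃ L0, gs = .blockF L0 :: gs' ∧
          ((t = .regular ∧
              c' = (applyFrames N gs' (.regular : Term Val Op Ext), G, restrict L L0, N)) ∨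
           (IsIrregularCore t ∧
              c' = (applyFrames N gs' t, G, restrict L L0, N))))) := by
  induction gs generalizing t with
  | nil =>
      simp only [applyFrames] at h
      rcases step_inv h with
          ⟨E, S, G0, L0, N0, S', G0', L0', N0', hb, hc, hc'⟩
        | ⟨E, e, G0, L0, N0, hc, hc'⟩
      · simp only [Prod.mk.injEq] at hc
        obtain ⟨h1, rfl, rfl, rfl⟩ := hc
        exact Or.inl ⟨E, S, S', G0', L0', N0', h1, hb, by simpa [applyFrames] using hc'⟩
      · simp only [Prod.mk.injEq] at hc
        obtain ⟨h1, rfl, rfl, rfl⟩ := hc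
        exact Or.inr (Or.inl ⟨E, e, h1, hc'⟩)
  | cons g gs ih =>
      cases g with
      | brkF =>
          simp only [applyFrames] at h
          rcases ih h with
              ⟨E, S, S', G', L', Nn', heq, hb, hc'⟩
            | ⟨E, e, heq, hc'⟩
            | ⟨gs', hpop⟩
          · rcases plug_eq_brkFrame heq.symm with ⟨rfl, rfl⟩ | ⟨E₁, rfl, h1⟩
            · cases hb with
              | brkPass m G L Nn hm =>
                  exact Or.inr (Or.inr ⟨gs, Or.inl ⟨rfl,
                    Or.inl ⟨hm, by simpa [plug, applyFrames] using hc'⟩⟩⟩)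
              | brkCatch G L Nn =>
                  exact Or.inr (Or.inr ⟨gs, Or.inl ⟨rfl,
                    Or.inr ⟨rfl, by simpa [plug, applyFrames] using hc'⟩⟩⟩)
            · exact Or.inl ⟨E₁, S, S', G', L', Nn', h1.symm, hb,
                by simpa [plug, applyFrames] using hc'⟩
          · rcases plug_eq_brkFrame heq.symm with ⟨rfl, h2⟩ | ⟨E₁, rfl, h1⟩
            · simp at h2
            · exact Or.inr (Or.inl ⟨E₁, e, h1.symm, hc'⟩)
          · rcases hpop with ⟨hg, hcase⟩ | ⟨L0, hg, hcase⟩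
            · subst hg
              rcases hcase with ⟨hm, _⟩ | ⟨hm, _⟩ <;> simp at hm
            · subst hg
              rcases hcase with ⟨hm, _⟩ | ⟨hm, _⟩
              · simp at hm
              · simp [IsIrregularCore] at hm
      | blockF Lg =>
          simp only [applyFrames] at h
          rcases ih h with
              ⟨E, S, S', G', L', Nn', heq, hb, hc'⟩
            | ⟨E, e, heq, hc'⟩
            | ⟨gs', hpop⟩
          · rcases plug_eq_scoped heq.symm with ⟨rfl, rfl⟩ | ⟨E₁, rfl, h1⟩
            · cases hb with
              | scopedNext ss L0 N0 G L Nn hne => exact absurd rfl hne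
              | scopedExitReg L0 N0 G L Nn =>
                  exact Or.inr (Or.inr ⟨gs, Or.inr ⟨Lg, rfl,
                    Or.inl ⟨rfl, by simpa [plug, applyFrames] using hc'⟩⟩⟩)
              | scopedExitIrr m ss L0 N0 G L Nn hirr =>
                  exact Or.inr (Or.inr ⟨gs, Or.inr ⟨Lg, rfl,
                    Or.inr ⟨hirr, by simpa [plug, applyFrames] using hc'⟩⟩⟩)
            · exact Or.inl ⟨E₁, S, S', G', L', Nn', h1.symm, hb,
                by simpa [plug, applyFrames] using hc'⟩
          · rcases plug_eq_scoped heq.symm with ⟨rfl, h2⟩ | ⟨E₁, rfl, h1⟩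
            · simp at h2
            · exact Or.inr (Or.inl ⟨E₁, e, h1.symm, hc'⟩)
          · rcases hpop with ⟨hg, hcase⟩ | ⟨L0, hg, hcase⟩
            · subst hg
              rcases hcase with ⟨hm, _⟩ | ⟨hm, _⟩ <;> simp at hm
            · subst hg
              rcases hcase with ⟨hm, _⟩ | ⟨hm, _⟩
              · simp at hm
              · simp [IsIrregularCore] at hm

/-! #### Store and suffix helper lemmas -/

lemma restrict_restrict {La Lb L : Store Val} (h : Dom La = Dom Lb) :
    restrict (restrict L Lb) La = restrict L La := by
  funext x
  have hx : (La x).isSome ↔ (Lb x).isSome := by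
    have := Set.ext_iff.mp h x
    simpa [Dom] using this
  simp only [restrict]
  by_cases h1 : (La x).isSome
  · simp [h1, hx.mp h1]
  · simp [h1]

lemma suffix_singleton_last {xs : List (Frame Val)} {a b : Frame Val}
    (h : [b] <:+ xs ++ [a]) : b = a := by
  obtain ⟨pre, hp⟩ := h
  have h1 : (pre ++ [b]).getLast? = some b := by simp
  rw [hp] at h1
  simp at h1
  exact h1.symm

lemma suffix_tail_ne_nil {xs gs' : List (Frame Val)} {L₁ : Store Val}
    (h : Frame.brkF :: gs' <:+ xs ++ [Frame.blockF L₁]) : gs' ≠ [] := by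
  intro hnil
  subst hnil
  have := suffix_singleton_last h
  simp at this

/-! #### The bisimulation relation -/

/-- The simulation relation between a configuration carrying the redundant inner
    block frame (`c₁`) and the configuration without it (`c₂`). -/
def Rel (N : NS Val Op Ext) (fs : List (Frame Val)) (L₁ L₂ : Store Val)
    (c₁ c₂ : Config Val Op Ext Gl) : Prop :=
  (∃ t G L Nn,
      c₁ = (applyFrames N (Frame.blockF L₂ :: (fs ++ [Frame.blockF L₁])) t, G, L, Nn) ∧
      c₂ = (applyFrames N (fs ++ [Frame.blockF L₁]) t, G, L, Nn))
  ∨ (∃ m gs G L Nn, gs <:+ fs ++ [Frame.blockF L₁] ∧ gs ≠ [] ∧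
      (m = Term.regular ∨ IsIrregularCore m) ∧
      c₁ = (applyFrames N gs m, G, restrict L L₂, N) ∧
      c₂ = (applyFrames N gs m, G, L, Nn))
  ∨ c₁ = c₂

section Sim

variable {N : NS Val Op Ext} {fs : List (Frame Val)} {L₁ L₂ : Store Val}

lemma dom_of_mem (hd : ∀ Lj, Frame.blockF Lj ∈ fs → Dom Lj = Dom L₁)
    (h12 : Dom L₁ = Dom L₂) {gs : List (Frame Val)} {L0 : Store Val}
    (hsuf : gs <:+ fs ++ [Frame.blockF L₁]) (hmem : Frame.blockF L0 ∈ gs) :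
    Dom L0 = Dom L₂ := by
  have h0 : Frame.blockF L0 ∈ fs ++ [Frame.blockF L₁] := hsuf.subset hmem
  rcases List.mem_append.mp h0 with h | h
  · exact (hd _ h).trans h12
  · simp at h
    rw [h]
    exact h12

lemma rel_fwd (hd : ∀ Lj, Frame.blockF Lj ∈ fs → Dom Lj = Dom L₁)
    (h12 : Dom L₁ = Dom L₂) {c₁ c₂ c₁' : Config Val Op Ext Gl}
    (hR : Rel N fs L₁ L₂ c₁ c₂) (hs : Step D c₁ c₁') :
    ∃ c₂', Steps D c₂ c₂' ∧ Rel N fs L₁ L₂ c₁' c₂' := by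
  rcases hR with ⟨t, G, L, Nn, rfl, rfl⟩ | ⟨m, gs, G, L, Nn, hsuf, hne, hm, rfl, rfl⟩ | rfl
  · -- state A
    rcases step_frames_inv hs with
        ⟨E, S, S', G', L', Nn', rfl, hb, rfl⟩
      | ⟨E, e, rfl, rfl⟩
      | ⟨gs', hpop⟩
    · exact ⟨_, Relation.ReflTransGen.single (lift_ctx N _ E hb),
        Or.inl ⟨plug E S', G', L', Nn', rfl, rfl⟩⟩
    · exact ⟨_, Relation.ReflTransGen.single
        (lift_ext N _ E e G L Nn (Or.inl (by simp))), Or.inr (Or.inr rfl)⟩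
    · rcases hpop with ⟨hgs, _⟩ | ⟨L0, hgs, hcase⟩
      · simp at hgs
      · injection hgs with h1 h2
        injection h1 with h3
        subst h3
        subst h2
        rcases hcase with ⟨rfl, rfl⟩ | ⟨hirr, rfl⟩
        · exact ⟨_, Relation.ReflTransGen.refl,
            Or.inr (Or.inl ⟨.regular, _, G, L, Nn, List.suffix_refl _, by simp,
              Or.inl rfl, rfl, rfl⟩)⟩
        · exact ⟨_, Relation.ReflTransGen.refl,
            Or.inr (Or.inl ⟨t, _, G, L, Nn, List.suffix_refl _, by simp,
              Or.inr hirr, rfl, rfl⟩)⟩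
  · -- state B
    rcases step_frames_inv hs with
        ⟨E, S, S', G', L', Nn', heq, hb, rfl⟩
      | ⟨E, e, heq, rfl⟩
      | ⟨gs', hpop⟩
    · obtain ⟨rfl, rfl⟩ := plug_mode (by tauto) heq.symm
      exact (base_no_mode hb hm).elim
    · obtain ⟨-, hS⟩ := plug_mode (by tauto) heq.symm
      rcases hm with rfl | hirr
      · simp at hS
      · rcases hirr with rfl | rfl | rfl <;> simp at hS
    · rcases hpop with ⟨rfl, hcase⟩ | ⟨L0, rfl, hcase⟩
      · have hsuf' : gs' <:+ fs ++ [Frame.blockF L₁] :=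
          (List.suffix_cons _ _).trans hsuf
        have hne' : gs' ≠ [] := suffix_tail_ne_nil hsuf
        rcases hcase with ⟨hm', rfl⟩ | ⟨rfl, rfl⟩
        · exact ⟨_, Relation.ReflTransGen.single (pop_brk_pass N gs' m G L Nn hm'),
            Or.inr (Or.inl ⟨m, gs', G, L, Nn, hsuf', hne', hm, rfl, rfl⟩)⟩
        · exact ⟨_, Relation.ReflTransGen.single (pop_brk_catch N gs' G L Nn),
            Or.inr (Or.inl ⟨.regular, gs', G, L, Nn, hsuf', hne', Or.inl rfl, rfl, rfl⟩)⟩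
      · have hdom : Dom L0 = Dom L₂ := dom_of_mem hd h12 hsuf (by simp)
        have hres : restrict (restrict L L₂) L0 = restrict L L0 :=
          restrict_restrict hdom
        rcases hcase with ⟨rfl, rfl⟩ | ⟨hirr, rfl⟩
        · exact ⟨_, Relation.ReflTransGen.single (pop_block_reg N gs' L0 G L Nn),
            Or.inr (Or.inr (by rw [hres]))⟩
        · exact ⟨_, Relation.ReflTransGen.single (pop_block_irr N gs' L0 G L Nn hirr),
            Or.inr (Or.inr (by rw [hres]))⟩
  · exact ⟨c₁', Relation.ReflTransGen.single hs, Or.inr (Or.inr rfl)⟩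

lemma rel_bwd (hd : ∀ Lj, Frame.blockF Lj ∈ fs → Dom Lj = Dom L₁)
    (h12 : Dom L₁ = Dom L₂) {c₁ c₂ c₂' : Config Val Op Ext Gl}
    (hR : Rel N fs L₁ L₂ c₁ c₂) (hs : Step D c₂ c₂') :
    ∃ c₁', Steps D c₁ c₁' ∧ Rel N fs L₁ L₂ c₁' c₂' := by
  rcases hR with ⟨t, G, L, Nn, rfl, rfl⟩ | ⟨m, gs, G, L, Nn, hsuf, hne, hm, rfl, rfl⟩ | rfl
  · -- state A
    rcases step_frames_inv hs with
        ⟨E, S, S', G', L', Nn', rfl, hb, rfl⟩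
      | ⟨E, e, rfl, rfl⟩
      | ⟨gs', hpop⟩
    · exact ⟨_, Relation.ReflTransGen.single (lift_ctx N _ E hb),
        Or.inl ⟨plug E S', G', L', Nn', rfl, rfl⟩⟩
    · exact ⟨_, Relation.ReflTransGen.single
        (lift_ext N _ E e G L Nn (Or.inl (by simp))), Or.inr (Or.inr rfl)⟩
    · -- pop of the innermost frame of fs ++ [blockF L₁] on the right;
      -- the left side does two steps.
      rcases hpop with ⟨hgs, hcase⟩ | ⟨L0, hgs, hcase⟩
      · -- innermost frame is brkF
        cases fs with
        | nil => simp at hgs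
        | cons f fs' =>
          rw [List.cons_append] at hgs
          injection hgs with h1 h2
          subst h1
          subst h2
          have hsuf' : fs' ++ [Frame.blockF L₁] <:+
              (Frame.brkF :: fs') ++ [Frame.blockF L₁] := by
            rw [List.cons_append]; exact List.suffix_cons _ _
          have hne' : fs' ++ [Frame.blockF L₁] ≠ ([] : List (Frame Val)) := by simp
          rcases hcase with ⟨hm', rfl⟩ | ⟨rfl, rfl⟩
          · have s1 : Step D
                (applyFrames N (Frame.blockF L₂ :: ((Frame.brkF :: fs') ++ [Frame.blockF L₁])) t, G, L, Nn)
                (applyFrames N ((Frame.brkF :: fs') ++ [Frame.blockF L₁]) t, G, restrict L L₂, N) := by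
              rcases hm' with rfl | rfl
              · exact pop_block_reg N _ L₂ G L Nn
              · exact pop_block_irr N _ L₂ G L Nn (Or.inr (Or.inr rfl))
            have s2 : Step D
                (applyFrames N ((Frame.brkF :: fs') ++ [Frame.blockF L₁]) t, G, restrict L L₂, N)
                (applyFrames N (fs' ++ [Frame.blockF L₁]) t, G, restrict L L₂, N) := by
              rw [List.cons_append]
              exact pop_brk_pass N _ t G (restrict L L₂) N hm'
            refine ⟨_, (Relation.ReflTransGen.single s1).tail s2,
              Or.inr (Or.inl ⟨t, _, G, L, Nn, hsuf', hne', ?_, rfl, rfl⟩)⟩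
            rcases hm' with rfl | rfl
            · exact Or.inl rfl
            · exact Or.inr (Or.inr (Or.inr rfl))
          · have s1 : Step D
                (applyFrames N (Frame.blockF L₂ :: ((Frame.brkF :: fs') ++ [Frame.blockF L₁])) (.brk : Term Val Op Ext), G, L, Nn)
                (applyFrames N ((Frame.brkF :: fs') ++ [Frame.blockF L₁]) (.brk : Term Val Op Ext), G, restrict L L₂, N) :=
              pop_block_irr N _ L₂ G L Nn (Or.inl rfl)
            have s2 : Step D
                (applyFrames N ((Frame.brkF :: fs') ++ [Frame.blockF L₁]) (.brk : Term Val Op Ext), G, restrict L L₂, N)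
                (applyFrames N (fs' ++ [Frame.blockF L₁]) (.regular : Term Val Op Ext), G, restrict L L₂, N) := by
              rw [List.cons_append]
              exact pop_brk_catch N _ G (restrict L L₂) N
            exact ⟨_, (Relation.ReflTransGen.single s1).tail s2,
              Or.inr (Or.inl ⟨.regular, _, G, L, Nn, hsuf', hne', Or.inl rfl, rfl, rfl⟩)⟩
      · -- innermost frame is blockF L0
        have hdom : Dom L0 = Dom L₂ := by
          apply dom_of_mem hd h12 (List.suffix_refl _)
          rw [hgs]; simp
        have hres : restrict (restrict L L₂) L0 = restrict L L0 :=
          restrict_restrict hdom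
        rcases hcase with ⟨rfl, rfl⟩ | ⟨hirr, rfl⟩
        · have s1 : Step D
              (applyFrames N (Frame.blockF L₂ :: (fs ++ [Frame.blockF L₁])) (.regular : Term Val Op Ext), G, L, Nn)
              (applyFrames N (fs ++ [Frame.blockF L₁]) (.regular : Term Val Op Ext), G, restrict L L₂, N) :=
            pop_block_reg N _ L₂ G L Nn
          have s2 : Step D
              (applyFrames N (fs ++ [Frame.blockF L₁]) (.regular : Term Val Op Ext), G, restrict L L₂, N)
              (applyFrames N gs' (.regular : Term Val Op Ext), G, restrict (restrict L L₂) L0, N) := by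
            rw [hgs]
            exact pop_block_reg N gs' L0 G (restrict L L₂) N
          exact ⟨_, (Relation.ReflTransGen.single s1).tail s2,
            Or.inr (Or.inr (by rw [hres]))⟩
        · have s1 : Step D
              (applyFrames N (Frame.blockF L₂ :: (fs ++ [Frame.blockF L₁])) t, G, L, Nn)
              (applyFrames N (fs ++ [Frame.blockF L₁]) t, G, restrict L L₂, N) :=
            pop_block_irr N _ L₂ G L Nn hirr
          have s2 : Step D
              (applyFrames N (fs ++ [Frame.blockF L₁]) t, G, restrict L L₂, N)
              (applyFrames N gs' t, G, restrict (restrict L L₂) L0, N) := by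
            rw [hgs]
            exact pop_block_irr N gs' L0 G (restrict L L₂) N hirr
          exact ⟨_, (Relation.ReflTransGen.single s1).tail s2,
            Or.inr (Or.inr (by rw [hres]))⟩
  · -- state B
    rcases step_frames_inv hs with
        ⟨E, S, S', G', L', Nn', heq, hb, rfl⟩
      | ⟨E, e, heq, rfl⟩
      | ⟨gs', hpop⟩
    · obtain ⟨rfl, rfl⟩ := plug_mode (by tauto) heq.symm
      exact (base_no_mode hb hm).elim
    · obtain ⟨-, hS⟩ := plug_mode (by tauto) heq.symm
      rcases hm with rfl | hirr
      · simp at hS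
      · rcases hirr with rfl | rfl | rfl <;> simp at hS
    · rcases hpop with ⟨rfl, hcase⟩ | ⟨L0, rfl, hcase⟩
      · have hsuf' : gs' <:+ fs ++ [Frame.blockF L₁] :=
          (List.suffix_cons _ _).trans hsuf
        have hne' : gs' ≠ [] := suffix_tail_ne_nil hsuf
        rcases hcase with ⟨hm', rfl⟩ | ⟨rfl, rfl⟩
        · exact ⟨_, Relation.ReflTransGen.single
              (pop_brk_pass N gs' m G (restrict L L₂) N hm'),
            Or.inr (Or.inl ⟨m, gs', G, L, Nn, hsuf', hne', hm, rfl, rfl⟩)⟩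
        · exact ⟨_, Relation.ReflTransGen.single
              (pop_brk_catch N gs' G (restrict L L₂) N),
            Or.inr (Or.inl ⟨.regular, gs', G, L, Nn, hsuf', hne', Or.inl rfl, rfl, rfl⟩)⟩
      · have hdom : Dom L0 = Dom L₂ := dom_of_mem hd h12 hsuf (by simp)
        have hres : restrict (restrict L L₂) L0 = restrict L L0 :=
          restrict_restrict hdom
        rcases hcase with ⟨rfl, rfl⟩ | ⟨hirr, rfl⟩
        · exact ⟨_, Relation.ReflTransGen.single
              (pop_block_reg N gs' L0 G (restrict L L₂) N),
            Or.inr (Or.inr (by rw [hres]))⟩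
        · exact ⟨_, Relation.ReflTransGen.single
              (pop_block_irr N gs' L0 G (restrict L L₂) N hirr),
            Or.inr (Or.inr (by rw [hres]))⟩
  · exact ⟨c₂', Relation.ReflTransGen.single hs, Or.inr (Or.inr rfl)⟩

lemma rel_steps_fwd (hd : ∀ Lj, Frame.blockF Lj ∈ fs → Dom Lj = Dom L₁)
    (h12 : Dom L₁ = Dom L₂) {c₁ c₂ cf : Config Val Op Ext Gl}
    (hR : Rel N fs L₁ L₂ c₁ c₂) (hs : Steps D c₁ cf) :
    ∃ c₂', Steps D c₂ c₂' ∧ Rel N fs L₁ L₂ cf c₂' := by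
  induction hs with
  | refl => exact ⟨c₂, Relation.ReflTransGen.refl, hR⟩
  | tail _ hstep ih =>
      obtain ⟨c₂', hs2, hrel⟩ := ih
      obtain ⟨c₂'', hs3, hrel'⟩ := rel_fwd hd h12 hrel hstep
      exact ⟨c₂'', hs2.trans hs3, hrel'⟩

lemma rel_steps_bwd (hd : ∀ Lj, Frame.blockF Lj ∈ fs → Dom Lj = Dom L₁)
    (h12 : Dom L₁ = Dom L₂) {c₁ c₂ cf : Config Val Op Ext Gl}
    (hR : Rel N fs L₁ L₂ c₁ c₂) (hs : Steps D c₂ cf) :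
    ∃ c₁', Steps D c₁ c₁' ∧ Rel N fs L₁ L₂ c₁' cf := by
  induction hs with
  | refl => exact ⟨c₁, Relation.ReflTransGen.refl, hR⟩
  | tail _ hstep ih =>
      obtain ⟨c₁', hs2, hrel⟩ := ih
      obtain ⟨c₁'', hs3, hrel'⟩ := rel_bwd hd h12 hrel hstep
      exact ⟨c₁'', hs2.trans hs3, hrel'⟩

lemma mode_ne_applyFrames {gs : List (Frame Val)} (hgs : gs ≠ [])
    {t MM : Term Val Op Ext} (hM : IsMode MM) : MM ≠ applyFrames N gs t := by
  simp only [IsMode, IsModeCore] at hM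
  rcases applyFrames_shape N gs t hgs with ⟨u, hu⟩ | ⟨l, a, b, hu⟩ <;> rw [hu] <;>
    rcases hM with (rfl | rfl | rfl | rfl) | ⟨e, rfl⟩ <;> simp

lemma rel_mode_left {MM : Term Val Op Ext} {G'' : Gl} {L'' : Store Val}
    {N'' : NS Val Op Ext} {c₂' : Config Val Op Ext Gl} (hM : IsMode MM)
    (hrel : Rel N fs L₁ L₂ ((MM, G'', L'', N'') : Config Val Op Ext Gl) c₂') :
    c₂' = (MM, G'', L'', N'') := by
  rcases hrel with ⟨t, G, L, Nn, h1, h2⟩ | ⟨m, gs, G, L, Nn, hsuf, hne, hm, h1, h2⟩ | h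
  · exact absurd (congrArg Prod.fst h1) (mode_ne_applyFrames (by simp) hM)
  · exact absurd (congrArg Prod.fst h1) (mode_ne_applyFrames hne hM)
  · exact h.symm

lemma rel_mode_right {MM : Term Val Op Ext} {G'' : Gl} {L'' : Store Val}
    {N'' : NS Val Op Ext} {c₁' : Config Val Op Ext Gl} (hM : IsMode MM)
    (hrel : Rel N fs L₁ L₂ c₁' ((MM, G'', L'', N'') : Config Val Op Ext Gl)) :
    c₁' = (MM, G'', L'', N'') := by
  rcases hrel with ⟨t, G, L, Nn, h1, h2⟩ | ⟨m, gs, G, L, Nn, hsuf, hne, hm, h1, h2⟩ | h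
  · exact absurd (congrArg Prod.fst h2) (mode_ne_applyFrames (by simp) hM)
  · exact absurd (congrArg Prod.fst h2) (mode_ne_applyFrames hne hM)
  · exact h

end Sim

end BlockDropping

/-- Block dropping: an inner block frame nested (through an
    interleaving of break frames and scoped blocks with equal store domains)
    under an outer block frame with the same store domain can be dropped. -/
theorem block_dropping {Val Op Ext Gl : Type} (D : Dialect Val Op Ext Gl)
    (fs : List (Frame Val)) (N : NS Val Op Ext)
    {S' MM : Term Val Op Ext} {G G'' : Gl} {L₁ L₂ L' L'' : Store Val}
    {N' N'' : NS Val Op Ext}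
    (hd : ∀ Lj, Frame.blockF Lj ∈ fs → Dom Lj = Dom L₁)
    (h12 : Dom L₁ = Dom L₂) (hM : IsMode MM) :
    Steps D (Term.scopedBlock [applyFrames N fs (Term.scopedBlock [S'] L₂ N)] L₁ N,
        G, L', N') (MM, G'', L'', N'') ↔
      Steps D (Term.scopedBlock [applyFrames N fs S'] L₁ N, G, L', N')
        (MM, G'', L'', N'') := by
  have e1 : Term.scopedBlock [applyFrames N fs (Term.scopedBlock [S'] L₂ N)] L₁ N
      = applyFrames N (Frame.blockF L₂ :: (fs ++ [Frame.blockF L₁])) S' := by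
    simp [applyFrames, applyFrames_append]
  have e2 : Term.scopedBlock [applyFrames N fs S'] L₁ N
      = applyFrames N (fs ++ [Frame.blockF L₁]) S' := by
    simp [applyFrames, applyFrames_append]
  have hA : Rel N fs L₁ L₂
      ((applyFrames N (Frame.blockF L₂ :: (fs ++ [Frame.blockF L₁])) S', G, L', N') :
        Config Val Op Ext Gl)
      (applyFrames N (fs ++ [Frame.blockF L₁]) S', G, L', N') :=
    Or.inl ⟨S', G, L', N', rfl, rfl⟩
  constructor
  · intro h
    rw [e1] at h
    obtain ⟨c₂', hsteps, hrel⟩ := rel_steps_fwd hd h12 hA h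
    have heq := rel_mode_left hM hrel
    rw [e2]
    exact heq ▸ hsteps
  · intro h
    rw [e2] at h
    obtain ⟨c₁', hsteps, hrel⟩ := rel_steps_bwd hd h12 hA h
    have heq := rel_mode_right hM hrel
    rw [e1]
    exact heq ▸ hsteps

end Yul
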